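/- Let g and w be independent standard Gaussian random variables, let ρ ∈ [-1,1], q = √(1-ρ²), and ĝ = ρg + qw. With φ(x) = max(x,0) the ReLU function, E[ φ(g)² φ(ĝ)² ] = ( 3ρq + arccos(-ρ)·(1 + 2ρ²) ) / (2π). -/

import Mathlib

/-!
In polar coordinates `(g, w) = (r cos θ, r sin θ)` the standard Gaussian density is
`e^{-r²/2} / 2π`, and with `α = arccos ρ` we have `ρ g + q w = r cos (θ - α)`. The integrand is
therefore `r⁴ · φ(cos θ)² φ(cos (θ - α))²`, so the expectation factors into the radial moment
`∫₀^∞ r⁵ e^{-r²/2} dr = 8` and the integral of `cos² θ cos² (θ - α)` over the arc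
`[α - π/2, π/2]` where both cosines are nonnegative. The latter is elementary, and
`arccos (-ρ) = π - α` gives the stated form.
-/

open MeasureTheory ProbabilityTheory Real

open scoped NNReal

lemma integral_gaussianReal_prod {μ₁ μ₂ : ℝ} {v₁ v₂ : ℝ≥0} (hv₁ : v₁ ≠ 0) (hv₂ : v₂ ≠ 0)
    (F : ℝ × ℝ → ℝ) :
    ∫ p, F p ∂(gaussianReal μ₁ v₁).prod (gaussianReal μ₂ v₂)
      = ∫ p, gaussianPDFReal μ₁ v₁ p.1 * gaussianPDFReal μ₂ v₂ p.2 * F p := by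
  rw [gaussianReal_of_var_ne_zero _ hv₁, gaussianReal_of_var_ne_zero _ hv₂,
    prod_withDensity (measurable_gaussianPDF _ _) (measurable_gaussianPDF _ _),
    ← Measure.volume_eq_prod, integral_withDensity_eq_integral_toReal_smul (by fun_prop)
      (ae_of_all _ fun _ => ENNReal.mul_lt_top gaussianPDF_lt_top gaussianPDF_lt_top)]
  simp only [ENNReal.toReal_mul, toReal_gaussianPDF, smul_eq_mul]

lemma gaussianPDFReal_zero_one_mul (x y : ℝ) :
    gaussianPDFReal 0 1 x * gaussianPDFReal 0 1 y = (2 * π)⁻¹ * exp (-(x ^ 2 + y ^ 2) / 2) := by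
  simp only [gaussianPDFReal, NNReal.coe_one, mul_one, sub_zero]
  rw [mul_mul_mul_comm, ← exp_add, ← mul_inv, mul_self_sqrt (by positivity)]
  ring_nf

lemma integral_exp_neg_sq_mul_of_homogeneous {F : ℝ × ℝ → ℝ} {G : ℝ → ℝ} {n : ℕ}
    (hF : ∀ r θ, 0 < r → F (r * cos θ, r * sin θ) = r ^ n * G θ) :
    ∫ p : ℝ × ℝ, exp (-(p.1 ^ 2 + p.2 ^ 2) / 2) * F p
      = (∫ r in Set.Ioi 0, r ^ (n + 1) * exp (-r ^ 2 / 2)) * ∫ θ in Set.Ioo (-π) π, G θ := by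
  rw [← integral_comp_polarCoord_symm, polarCoord_target, Measure.volume_eq_prod,
    ← setIntegral_prod_mul]
  refine setIntegral_congr_fun (measurableSet_Ioi.prod measurableSet_Ioo) ?_
  rintro ⟨r, θ⟩ ⟨hr, -⟩
  have hnorm : (r * cos θ) ^ 2 + (r * sin θ) ^ 2 = r ^ 2 := by
    linear_combination r ^ 2 * cos_sq_add_sin_sq θ
  simp only [polarCoord_symm_apply, smul_eq_mul, hF r θ hr, hnorm]
  ring

lemma integral_pow_five_mul_exp_neg_sq_div_two :
    ∫ r in Set.Ioi (0 : ℝ), r ^ 5 * exp (-r ^ 2 / 2) = 8 := by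
  have hΓ : Gamma 3 = 2 := by
    norm_num [show (3 : ℝ) = (2 : ℕ) + 1 by norm_num, Gamma_nat_eq_factorial]
  have h := integral_rpow_mul_exp_neg_mul_rpow (p := 2) (q := 5) (b := 1 / 2)
    (by norm_num) (by norm_num) (by norm_num)
  norm_num [hΓ] at h
  rw [← h]
  refine setIntegral_congr_fun measurableSet_Ioi fun r _ => ?_
  norm_cast
  ring_nf

lemma hasDerivAt_primitive_cos_sq_mul_cos_sub_sq (α θ : ℝ) :
    HasDerivAt (fun θ => cos (2 * α) / 4 * (sin θ * cos θ ^ 3)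
        + (2 + cos (2 * α)) / 8 * (θ + sin θ * cos θ) - sin (2 * α) / 4 * cos θ ^ 4)
      (cos θ ^ 2 * cos (θ - α) ^ 2) θ := by
  have hs := hasDerivAt_sin θ
  have hc := hasDerivAt_cos θ
  have H := (((hs.mul (hc.pow 3)).const_mul (cos (2 * α) / 4)).add
    (((hasDerivAt_id' (x := θ)).add (hs.mul hc)).const_mul ((2 + cos (2 * α)) / 8))).sub
    ((hc.pow 4).const_mul (sin (2 * α) / 4))
  refine H.congr_deriv ?_
  rw [cos_sub, cos_two_mul, sin_two_mul]
  push_cast [Pi.pow_apply]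
  linear_combination (-(cos θ ^ 2 * cos α ^ 2) / 2 - cos θ ^ 2 / 4 - 1 / 8 - cos α ^ 2 / 4)
      * sin_sq_add_cos_sq θ - cos θ ^ 2 * sin θ ^ 2 * sin_sq_add_cos_sq α

lemma integral_relu_cos_sq_mul_relu_cos_sub_sq {α : ℝ} (hα₀ : 0 ≤ α) (hαπ : α ≤ π) :
    ∫ θ in Set.Ioo (-π) π, max (cos θ) 0 ^ 2 * max (cos (θ - α)) 0 ^ 2
      = ((1 + 2 * cos α ^ 2) * (π - α) + 3 * cos α * sin α) / 8 := by
  have hπ := pi_pos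
  have hsupp : ∀ θ ∈ Set.Ioo (-π) π \ Set.Icc (α - π / 2) (π / 2),
      max (cos θ) 0 ^ 2 * max (cos (θ - α)) 0 ^ 2 = 0 := by
    rintro θ ⟨⟨hθ₁, hθ₂⟩, hθ⟩
    rw [Set.mem_Icc, not_and_or, not_le, not_le] at hθ
    have hneg : cos θ ≤ 0 ∨ cos (θ - α) ≤ 0 := by
      rcases le_or_gt θ (-(π / 2)) with hleft | hleft
      · left; rw [← cos_neg]; exact cos_nonpos_of_pi_div_two_le_of_le (by linarith) (by linarith)
      rcases hθ with hbelow | habove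
      · right; rw [← cos_neg]; exact cos_nonpos_of_pi_div_two_le_of_le (by linarith) (by linarith)
      · left; exact cos_nonpos_of_pi_div_two_le_of_le habove.le (by linarith)
    rcases hneg with h | h <;> simp [max_eq_right h]
  have hrelu : Set.EqOn (fun θ => max (cos θ) 0 ^ 2 * max (cos (θ - α)) 0 ^ 2)
      (fun θ => cos θ ^ 2 * cos (θ - α) ^ 2) (Set.Icc (α - π / 2) (π / 2)) := by
    rintro θ ⟨hθ₁, hθ₂⟩
    dsimp only
    rw [max_eq_left (cos_nonneg_of_neg_pi_div_two_le_of_le (by linarith) hθ₂),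
      max_eq_left (cos_nonneg_of_neg_pi_div_two_le_of_le (by linarith) (by linarith))]
  rw [setIntegral_eq_of_subset_of_forall_sdiff_eq_zero measurableSet_Ioo
      (Set.Icc_subset_Ioo (by linarith) (by linarith)) hsupp,
    setIntegral_congr_fun measurableSet_Icc hrelu, integral_Icc_eq_integral_Ioc,
    ← intervalIntegral.integral_of_le (by linarith),
    intervalIntegral.integral_eq_sub_of_hasDerivAt
      (fun θ _ => hasDerivAt_primitive_cos_sq_mul_cos_sub_sq α θ)
      ((by fun_prop : Continuous _).intervalIntegrable _ _)]
  simp only [sin_pi_div_two, cos_pi_div_two, sin_sub_pi_div_two, cos_sub_pi_div_two, sin_two_mul,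
    cos_two_mul]
  linear_combination (sin α * cos α / 4 + sin α ^ 3 * cos α / 2) * sin_sq_add_cos_sq α

theorem relu_kernel_K2 (ρ : ℝ) (hρ : ρ ∈ Set.Icc (-1 : ℝ) 1) :
    (∫ p : ℝ × ℝ,
        (max p.1 0) ^ 2 * (max (ρ * p.1 + Real.sqrt (1 - ρ ^ 2) * p.2) 0) ^ 2
      ∂((gaussianReal 0 1).prod (gaussianReal 0 1)))
    = (3 * ρ * Real.sqrt (1 - ρ ^ 2) + Real.arccos (-ρ) * (1 + 2 * ρ ^ 2)) / (2 * π) := by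
  set q := √(1 - ρ ^ 2)
  set α := arccos ρ
  have hcos : cos α = ρ := cos_arccos hρ.1 hρ.2
  have hsin : sin α = q := sin_arccos ρ
  have hhom : ∀ r θ, 0 < r →
      max (r * cos θ) 0 ^ 2 * max (ρ * (r * cos θ) + q * (r * sin θ)) 0 ^ 2
        = r ^ 4 * (max (cos θ) 0 ^ 2 * max (cos (θ - α)) 0 ^ 2) := by
    intro r θ hr
    have hmax (x : ℝ) : max (r * x) 0 = r * max x 0 := by
      rw [mul_max_of_nonneg _ _ hr.le, mul_zero]
    have hrot : ρ * (r * cos θ) + q * (r * sin θ) = r * cos (θ - α) := by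
      rw [cos_sub, hcos, hsin]; ring
    rw [hrot, hmax, hmax]
    ring
  simp_rw [integral_gaussianReal_prod one_ne_zero one_ne_zero, gaussianPDFReal_zero_one_mul,
    mul_assoc, integral_const_mul]
  rw [integral_exp_neg_sq_mul_of_homogeneous hhom, integral_pow_five_mul_exp_neg_sq_div_two,
    integral_relu_cos_sq_mul_relu_cos_sub_sq (arccos_nonneg ρ) (arccos_le_pi ρ), hcos, hsin,
    arccos_neg]
  field_simp
  ring
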